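/- Let G be a weighted graph with positive integer weights w, and let k be a positive integer with k ≥ max w. Define the k-spinning S_k(G) as the graph with vertex set VG × Z_k, where (u,i) is adjacent to (v,j) iff (uv ∈ EG and j ∈ {i, i+1, ..., i+w_{uv}-1} mod k) or (u = v and i ≠ j). Then a point θ ∈ R^{|VG|} is an equilibrium of the Kuramoto system on G (i.e., for all v, ∑_{u ~ v} w_{uv} sin(θ_u - θ_v) = 0) if and only if the lifted point θ^σ defined by θ^σ_{(u,i)} = θ_u is an equilibrium of the unweighted Kuramoto system on S_k(G) (i.e., for all vertices x of S_k(G), ∑_{y ~ x} sin(θ^σ_y - θ^σ_x) = 0). -/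

import Mathlib

open Real Finset

/-- Adjacency of the `k`-spinning of a weighted graph with oriented weight
function `w` (each edge carries its weight in exactly one direction). -/
def spinAdj {V : Type*} (k : ℕ) (w : V → V → ℕ) (x y : V × ZMod k) : Prop :=
  (y.2 - x.2).val < w x.1 y.1 ∨ (x.2 - y.2).val < w y.1 x.1 ∨ (x.1 = y.1 ∧ x.2 ≠ y.2)

instance {V : Type*} [DecidableEq V] (k : ℕ) (w : V → V → ℕ) (x y : V × ZMod k) :
    Decidable (spinAdj k w x y) := by unfold spinAdj; infer_instance

/-!
For `u ≠ v` only one of `w u v`, `w v u` is nonzero, so the copies `(u, j)` adjacent to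
`(v, i)` are those with `j` in a window `i + ℕ_m` (or `i - ℕ_m`) of length
`m = w u v + w v u ≤ k`: there are exactly `m` of them. As the lifted phases do not depend on
the layer, the unweighted Kuramoto sum at `(v, i)` on `S_k(G)` is the weighted one at `v`;
copies `(v, j)` of `v` itself contribute `sin 0 = 0`.
-/

namespace ZMod

variable {k : ℕ} [NeZero k]

theorem card_filter_val_lt (m : ℕ) : #{d : ZMod k | d.val < m} = min k m := by
  obtain ⟨n, rfl⟩ := Nat.exists_eq_succ_of_ne_zero (NeZero.ne k)
  exact Fin.card_filter_val_lt

theorem card_filter_val_sub_lt (i : ZMod k) (m : ℕ) :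
    #{j : ZMod k | (j - i).val < m} = min k m := by
  rw [← card_filter_val_lt]
  exact card_equiv (Equiv.subRight i) (by simp)

theorem card_filter_val_sub_lt' (i : ZMod k) (m : ℕ) :
    #{j : ZMod k | (i - j).val < m} = min k m := by
  rw [← card_filter_val_lt]
  exact card_equiv (Equiv.subLeft i) (by simp)

end ZMod

section Spinning

variable {V : Type*} [DecidableEq V] {w : V → V → ℕ} {k : ℕ} [NeZero k]

theorem card_spinAdj_fiber (horient : ∀ u v, w u v = 0 ∨ w v u = 0)
    (hmax : ∀ u v, w u v ≤ k) {u v : V} (huv : u ≠ v) (i : ZMod k) :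
    #{j : ZMod k | spinAdj k w (v, i) (u, j)} = w u v + w v u := by
  rcases horient u v with h | h
  · simpa [spinAdj, h, huv.symm, min_eq_right (hmax v u)] using
      ZMod.card_filter_val_sub_lt i (w v u)
  · simpa [spinAdj, h, huv.symm, min_eq_right (hmax u v)] using
      ZMod.card_filter_val_sub_lt' i (w u v)

theorem sum_spinAdj_sin [Fintype V] (horient : ∀ u v, w u v = 0 ∨ w v u = 0)
    (hmax : ∀ u v, w u v ≤ k) (θ : V → ℝ) (v : V) (i : ZMod k) :
    ∑ y : V × ZMod k, (if spinAdj k w (v, i) y then Real.sin (θ y.1 - θ v) else 0) =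
      ∑ u, ((w u v + w v u : ℕ) : ℝ) * Real.sin (θ u - θ v) := by
  rw [Fintype.sum_prod_type]
  refine sum_congr rfl fun u _ => ?_
  obtain rfl | huv := eq_or_ne u v
  · simp
  · simp only [← sum_filter, sum_const, card_spinAdj_fiber horient hmax huv, nsmul_eq_mul]

end Spinning

theorem equilibrium_iff_spinning_equilibrium_general {V : Type*} [Fintype V] [DecidableEq V]
    (w : V → V → ℕ)
    (horient : ∀ u v, w u v = 0 ∨ w v u = 0)
    (k : ℕ) [NeZero k] (hmax : ∀ u v, w u v ≤ k)
    (θ : V → ℝ) :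
    (∀ v, ∑ u, ((w u v + w v u : ℕ) : ℝ) * Real.sin (θ u - θ v) = 0) ↔
    (∀ x : V × ZMod k,
      ∑ y : V × ZMod k,
        (if spinAdj k w x y then Real.sin (θ y.1 - θ x.1) else 0) = 0) := by
  have lift := sum_spinAdj_sin horient hmax θ
  exact ⟨fun h ⟨v, i⟩ => (lift v i).trans (h v),
    fun h v => (lift v 0).symm.trans (h (v, 0))⟩

/-- A point `θ` is an equilibrium of the weighted Kuramoto system on `G`
iff its lift `θ^σ` is an equilibrium of the unweighted Kuramoto system on the
`k`-spinning `S_k(G)`. -/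
theorem equilibrium_iff_spinning_equilibrium {V : Type*} [Fintype V] [DecidableEq V]
    (w : V → V → ℕ) (hdiag : ∀ v, w v v = 0)
    (horient : ∀ u v, w u v = 0 ∨ w v u = 0)
    (k : ℕ) [NeZero k] (hmax : ∀ u v, w u v ≤ k)
    (θ : V → ℝ) :
    (∀ v, ∑ u, ((w u v + w v u : ℕ) : ℝ) * Real.sin (θ u - θ v) = 0) ↔
    (∀ x : V × ZMod k,
      ∑ y : V × ZMod k,
        (if spinAdj k w x y then Real.sin (θ y.1 - θ x.1) else 0) = 0) :=
  equilibrium_iff_spinning_equilibrium_general w horient k hmax θ
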